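/- arXiv:1807.09892 — 3 statements merged into one kernel-verified Lean document; each statement's English description precedes it below -/
import Mathlib

section
/- If f : ℝⁿ → ℂ is continuous and 1-periodic (f(x+k)=f(x) for all k ∈ ℤⁿ), and (ε_m) is a sequence of positive reals tending to 0, then lim_{m→∞} ε_m^{n/2} ∫_{ℝⁿ} e^{-π ε_m |x|²} f(x) dx = ∫_{[0,1]ⁿ} f(x) dx. -/
/-!
Unfolding the integral over `ℝⁿ` onto the cube `[0,1)ⁿ`, periodicity of `f` replaces the Gaussian
by its `ℤⁿ`-periodization, which factorizes over the coordinates. In one variable, Jacobi's theta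
transformation (Poisson summation for the Gaussian) gives
`√ε ∑ₖ exp (-π ε (x + k)²) = θ(x, i/ε) = ∑ₖ exp (-π k² / ε) exp (2π i k x)`,
which tends to `1` as `ε → 0⁺` and stays bounded for `ε ≤ 1`, so dominated convergence on the
cube finishes the proof.
-/

open MeasureTheory Real Filter Topology
open Complex (I)

theorem MeasureTheory.IsAddFundamentalDomain.integral_eq_setIntegral_tsum_vadd
    {G α E : Type*} [AddGroup G] [Countable G] [AddAction G α] [MeasurableSpace α]
    [MeasurableConstVAdd G α] {μ : Measure α} [VAddInvariantMeasure G α μ]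
    [NormedAddCommGroup E] [NormedSpace ℝ E] {s : Set α}
    (h : IsAddFundamentalDomain G s μ) {f : α → E} (hf : Integrable f μ) :
    ∫ x, f x ∂μ = ∫ x in s, ∑' g : G, f (g +ᵥ x) ∂μ := by
  rw [h.integral_eq_tsum'' f hf, integral_tsum]
  · exact fun g => (hf.1.comp_quasiMeasurePreserving
      (measurePreserving_vadd g μ).quasiMeasurePreserving).restrict
  · rw [← h.lintegral_eq_tsum'' (‖f ·‖ₑ)]
    exact hf.2.ne

theorem integral_eq_setIntegral_tsum_add_int {ι E : Type*} [Fintype ι] [NormedAddCommGroup E]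
    [NormedSpace ℝ E] {f : (ι → ℝ) → E} (hf : Integrable f) :
    ∫ x, f x = ∫ x in Set.univ.pi fun _ => Set.Ico (0 : ℝ) 1,
      ∑' k : ι → ℤ, f (x + fun i => (k i : ℝ)) := by
  classical
  let b := Pi.basisFun ℝ ι
  let e := (b.restrictScalars ℤ).equivFun.toEquiv
  have : Countable (Submodule.span ℤ (Set.range b)).toAddSubgroup := .of_equiv _ e.symm
  have h := ZSpan.isAddFundamentalDomain' b volume
  rw [ZSpan.fundamentalDomain_pi_basisFun] at h
  rw [h.integral_eq_setIntegral_tsum_vadd hf]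
  congr 1 with x
  refine (e.symm.tsum_eq fun g => f ((g : ι → ℝ) + x)).symm.trans ?_
  congr 1 with k
  rw [add_comm]
  congr 2
  ext i
  simp [e, b, Pi.single_apply]

theorem exists_forall_norm_le_of_forall_add_int_eq {ι E : Type*} [SeminormedAddGroup E]
    {f : (ι → ℝ) → E} (hf : Continuous f)
    (hper : ∀ (x : ι → ℝ) (k : ι → ℤ), f (x + fun i => (k i : ℝ)) = f x) :
    ∃ C, ∀ x, ‖f x‖ ≤ C := by
  obtain ⟨C, hC⟩ := (isCompact_Icc (a := (0 : ι → ℝ)) (b := 1)).exists_bound_of_continuousOn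
    hf.continuousOn
  refine ⟨C, fun x => ?_⟩
  have hx : x = (fun i => Int.fract (x i)) + fun i => (⌊x i⌋ : ℝ) := by
    ext i; exact (Int.fract_add_floor _).symm
  rw [hx, hper]
  exact hC _ ⟨fun i => Int.fract_nonneg _, fun i => (Int.fract_lt_one _).le⟩

theorem hasSum_fin_pi_prod_of_nonneg {κ : Type*} {n : ℕ} {f : Fin n → κ → ℝ} {a : Fin n → ℝ}
    (hf0 : ∀ i k, 0 ≤ f i k) (hf : ∀ i, HasSum (f i) (a i)) :
    HasSum (fun k : Fin n → κ => ∏ i, f i (k i)) (∏ i, a i) := by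
  induction n with
  | zero => simp
  | succ n ih =>
    have htail := ih (fun i => hf0 i.succ) (fun i => hf i.succ)
    have hs := (hf 0).summable.mul_of_nonneg htail.summable (hf0 0)
      fun k => Finset.prod_nonneg fun i _ => hf0 i.succ (k i)
    rw [Fin.prod_univ_succ, ← (Fin.consEquiv fun _ => κ).hasSum_iff]
    simpa [Function.comp_def, Fin.prod_univ_succ] using (hf 0).mul htail hs

theorem hasSum_pi_prod_of_nonneg {ι κ : Type*} [Fintype ι] {f : ι → κ → ℝ} {a : ι → ℝ}
    (hf0 : ∀ i k, 0 ≤ f i k) (hf : ∀ i, HasSum (f i) (a i)) :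
    HasSum (fun k : ι → κ => ∏ i, f i (k i)) (∏ i, a i) := by
  let e := Fintype.equivFin ι
  have h := hasSum_fin_pi_prod_of_nonneg (fun j => hf0 (e.symm j)) (fun j => hf (e.symm j))
  rw [← e.symm.prod_comp, ← (e.symm.arrowCongr (Equiv.refl κ)).hasSum_iff]
  convert h using 2 with k
  simp [Equiv.arrowCongr_apply, ← e.prod_comp]

/-- Jacobi's functional equation at `z = i e x`, `τ = i e`. -/
theorem hasSum_sqrt_mul_exp_neg_mul_add_int_sq {e : ℝ} (he : 0 < e) (x : ℝ) :
    HasSum (fun k : ℤ => ((√e * rexp (-(π * e * (x + k) ^ 2)) : ℝ) : ℂ))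
      (jacobiTheta₂ x (I / e)) := by
  have he' : (e : ℂ) ≠ 0 := Complex.ofReal_ne_zero.mpr he.ne'
  have hsqrt : (e : ℂ) ^ (1 / 2 : ℂ) = (√e : ℂ) := by
    rw [Real.sqrt_eq_rpow, Complex.ofReal_cpow he.le]; norm_num
  have hsqrt' : (√e : ℂ) ≠ 0 := by exact_mod_cast (Real.sqrt_pos.mpr he).ne'
  have hθ := jacobiTheta₂_functional_equation (I * e * x) (I * e)
  rw [show -I * (I * e) = (e : ℂ) by linear_combination (-(e : ℂ)) * Complex.I_sq,
    show I * e * x / (I * e) = (x : ℂ) by field_simp,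
    show (-1 : ℂ) / (I * e) = I / e by field_simp; linear_combination (-1 : ℂ) * Complex.I_sq,
    show -π * I * (I * e * x) ^ 2 / (I * e) = ((π * e * x ^ 2 : ℝ) : ℂ) by
      push_cast; field_simp; linear_combination (-(x : ℂ) ^ 2) * Complex.I_sq,
    hsqrt] at hθ
  have hτ : 0 < (I * e : ℂ).im := by simpa using he
  have h := (hasSum_jacobiTheta₂_term (I * e * x) hτ).mul_left
    ((√e : ℂ) * Complex.exp ((-(π * e * x ^ 2) : ℝ)))
  rw [hθ, show (√e : ℂ) * Complex.exp ((-(π * e * x ^ 2) : ℝ)) *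
      (1 / √e * Complex.exp ((π * e * x ^ 2 : ℝ)) * jacobiTheta₂ x (I / e)) =
      Complex.exp ((-(π * e * x ^ 2) : ℝ) + (π * e * x ^ 2 : ℝ)) * jacobiTheta₂ x (I / e) by
    rw [Complex.exp_add]; field_simp] at h
  refine (h.congr_fun fun k => ?_).trans ?_
  · rw [jacobiTheta₂_term, mul_assoc (√e : ℂ), ← Complex.exp_add]
    push_cast
    congr 2
    linear_combination (-(π * e * (k : ℂ) ^ 2 + 2 * π * e * k * x)) * Complex.I_sq
  · simp

theorem norm_jacobiTheta₂_term_ofReal_I_div (k : ℤ) (x e : ℝ) :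
    ‖jacobiTheta₂_term k x (I / e)‖ = rexp (-π * k ^ 2 / e) := by
  rw [norm_jacobiTheta₂_term, Complex.div_ofReal_im]
  simp [div_eq_mul_inv]

theorem norm_jacobiTheta₂_term_ofReal_I_div_le (k : ℤ) (x : ℝ) {e : ℝ} (he : 0 < e)
    (he1 : e ≤ 1) : ‖jacobiTheta₂_term k x (I / e)‖ ≤ ‖jacobiTheta₂_term k 0 I‖ := by
  have h := norm_jacobiTheta₂_term_ofReal_I_div k 0 1
  rw [Complex.ofReal_zero, Complex.ofReal_one, div_one] at h
  rw [h, norm_jacobiTheta₂_term_ofReal_I_div, div_one, exp_le_exp, neg_mul, neg_div,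
    neg_le_neg_iff]
  exact le_div_self (by positivity) he he1

theorem summable_norm_jacobiTheta₂_term_zero_I :
    Summable fun k : ℤ => ‖jacobiTheta₂_term k 0 I‖ :=
  summable_norm_iff.mpr (hasSum_jacobiTheta₂_term 0 (by simp)).summable

theorem norm_jacobiTheta₂_ofReal_I_div_le (x : ℝ) {e : ℝ} (he : 0 < e) (he1 : e ≤ 1) :
    ‖jacobiTheta₂ x (I / e)‖ ≤ ∑' k : ℤ, ‖jacobiTheta₂_term k 0 I‖ :=
  tsum_of_norm_bounded summable_norm_jacobiTheta₂_term_zero_I.hasSum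
    fun k => norm_jacobiTheta₂_term_ofReal_I_div_le k x he he1

theorem tendsto_jacobiTheta₂_term_ofReal_I_div (k : ℤ) (x : ℝ) :
    Tendsto (fun e : ℝ => jacobiTheta₂_term k x (I / e)) (𝓝[>] 0)
      (𝓝 (if k = 0 then 1 else 0)) := by
  split_ifs with hk
  · simp [hk, jacobiTheta₂_term]
  rw [tendsto_zero_iff_norm_tendsto_zero]
  simp_rw [norm_jacobiTheta₂_term_ofReal_I_div, div_eq_mul_inv]
  have hk' : -π * (k : ℝ) ^ 2 < 0 := by
    have : (0 : ℝ) < (k : ℝ) ^ 2 := by positivity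
    nlinarith [pi_pos]
  exact tendsto_exp_atBot.comp (tendsto_inv_nhdsGT_zero.const_mul_atTop_of_neg hk')

theorem tendsto_jacobiTheta₂_ofReal_I_div (x : ℝ) :
    Tendsto (fun e : ℝ => jacobiTheta₂ x (I / e)) (𝓝[>] 0) (𝓝 1) := by
  have h := tendsto_tsum_of_dominated_convergence summable_norm_jacobiTheta₂_term_zero_I
    (fun k => tendsto_jacobiTheta₂_term_ofReal_I_div k x) ?_
  · simpa only [tsum_ite_eq, jacobiTheta₂] using h
  filter_upwards [Ioc_mem_nhdsGT one_pos] with e he k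
  exact norm_jacobiTheta₂_term_ofReal_I_div_le k x he.1 he.2

theorem continuous_jacobiTheta₂_ofReal {τ : ℂ} (hτ : 0 < τ.im) :
    Continuous fun x : ℝ => jacobiTheta₂ x τ :=
  continuous_iff_continuousAt.mpr fun x =>
    (differentiableAt_jacobiTheta₂_fst x hτ).continuousAt.comp
      Complex.continuous_ofReal.continuousAt

section Gaussian

variable {ι : Type*} [Fintype ι]

theorem hasSum_prod_sqrt_mul_exp_neg_mul_add_int_sq {e : ℝ} (he : 0 < e) (x : ι → ℝ) :
    HasSum (fun k : ι → ℤ => ((∏ i, √e * rexp (-(π * e * (x i + k i) ^ 2)) : ℝ) : ℂ))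
      (∏ i, jacobiTheta₂ (x i) (I / e)) := by
  have h1 (i : ι) := hasSum_sqrt_mul_exp_neg_mul_add_int_sq he (x i)
  have h2 (i : ι) := (Complex.summable_ofReal.mp (h1 i).summable).hasSum
  have h := hasSum_pi_prod_of_nonneg (fun i k => by positivity) h2
  rw [← Complex.hasSum_ofReal, Complex.ofReal_prod] at h
  convert h using 2 with i
  exact (h1 i).unique (Complex.hasSum_ofReal.mpr (h2 i))

theorem rpow_mul_exp_neg_mul_sum_sq {e : ℝ} (he : 0 < e) (x : ι → ℝ) :
    e ^ ((Fintype.card ι : ℝ) / 2) * rexp (-(π * e * ∑ i, x i ^ 2)) =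
      ∏ i, √e * rexp (-(π * e * x i ^ 2)) := by
  rw [Finset.prod_mul_distrib, Finset.prod_const, Finset.card_univ, ← Real.exp_sum,
    Real.sqrt_eq_rpow, ← Real.rpow_natCast, ← Real.rpow_mul he.le, Finset.mul_sum,
    ← Finset.sum_neg_distrib]
  ring_nf

theorem integrable_prod_sqrt_mul_exp_neg_mul_sq {e : ℝ} (he : 0 < e) :
    Integrable fun x : ι → ℝ => ∏ i, √e * rexp (-(π * e * x i ^ 2)) :=
  Integrable.fintype_prod (f := fun _ t => √e * rexp (-(π * e * t ^ 2))) fun _ => by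
    simpa only [neg_mul] using
      (integrable_exp_neg_mul_sq (by positivity : 0 < π * e)).const_mul √e

theorem rpow_mul_integral_gaussian_mul_eq_setIntegral_prod_jacobiTheta₂
    {f : (ι → ℝ) → ℂ} (hf : Continuous f)
    (hper : ∀ (x : ι → ℝ) (k : ι → ℤ), f (x + fun i => (k i : ℝ)) = f x) {e : ℝ} (he : 0 < e) :
    ((e ^ ((Fintype.card ι : ℝ) / 2) : ℝ) : ℂ) *
        ∫ x, ((rexp (-(π * e * ∑ i, x i ^ 2)) : ℝ) : ℂ) * f x =
      ∫ x in Set.univ.pi fun _ => Set.Ico (0 : ℝ) 1, (∏ i, jacobiTheta₂ (x i) (I / e)) * f x := by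
  obtain ⟨C, hC⟩ := exists_forall_norm_le_of_forall_add_int_eq hf hper
  rw [← integral_const_mul]
  simp_rw [← mul_assoc, ← Complex.ofReal_mul, rpow_mul_exp_neg_mul_sum_sq he]
  rw [integral_eq_setIntegral_tsum_add_int]
  · congr 1 with x
    simp_rw [hper, tsum_mul_right, Pi.add_apply]
    rw [(hasSum_prod_sqrt_mul_exp_neg_mul_add_int_sq he x).tsum_eq]
  · exact (integrable_prod_sqrt_mul_exp_neg_mul_sq he).ofReal.mul_bdd hf.aestronglyMeasurable
      (.of_forall hC)

theorem tendsto_setIntegral_prod_jacobiTheta₂_mul {s : Set (ι → ℝ)} {f : (ι → ℝ) → ℂ}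
    (hf : IntegrableOn f s) :
    Tendsto (fun e : ℝ => ∫ x in s, (∏ i, jacobiTheta₂ (x i) (I / e)) * f x) (𝓝[>] 0)
      (𝓝 (∫ x in s, f x)) := by
  refine tendsto_integral_filter_of_dominated_convergence
    (fun x => (∑' k : ℤ, ‖jacobiTheta₂_term k 0 I‖) ^ Fintype.card ι * ‖f x‖)
    ?_ ?_ (hf.norm.const_mul _) (.of_forall fun x => ?_)
  · filter_upwards [self_mem_nhdsWithin] with e (he : 0 < e)
    have hτ : 0 < (I / e : ℂ).im := by simpa [Complex.div_ofReal_im] using he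
    exact ((continuous_finsetProd _ fun i _ =>
      (continuous_jacobiTheta₂_ofReal hτ).comp (continuous_apply i)).aestronglyMeasurable).mul
        hf.1
  · filter_upwards [Ioc_mem_nhdsGT one_pos] with e he
    refine .of_forall fun x => ?_
    rw [norm_mul, norm_prod]
    refine mul_le_mul_of_nonneg_right ?_ (norm_nonneg _)
    refine (Finset.prod_le_prod (fun i _ => norm_nonneg _)
      fun i _ => norm_jacobiTheta₂_ofReal_I_div_le (x i) he.1 he.2).trans_eq ?_
    rw [Finset.prod_const, Finset.card_univ]
  · simpa using (tendsto_finsetProd Finset.univ fun i _ =>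
      tendsto_jacobiTheta₂_ofReal_I_div (x i)).mul_const (f x)

end Gaussian

/-- Gaussian averaging lemma: for continuous 1-periodic `f` on `ℝⁿ` and positive
`ε_m → 0`, `ε_m^{n/2} ∫_{ℝⁿ} e^{-π ε_m |x|²} f(x) dx → ∫_{[0,1]ⁿ} f(x) dx`. -/
theorem stmt0 {n : ℕ} (f : (Fin n → ℝ) → ℂ) (hf : Continuous f)
    (hper : ∀ (x : Fin n → ℝ) (k : Fin n → ℤ), f (x + fun i => (k i : ℝ)) = f x)
    (ε : ℕ → ℝ) (hεpos : ∀ m, 0 < ε m) (hε0 : Tendsto ε atTop (nhds (0 : ℝ))) :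
    Tendsto (fun m : ℕ =>
        ((ε m ^ ((n : ℝ) / 2) : ℝ) : ℂ) *
          ∫ x : Fin n → ℝ, ((Real.exp (-(π * ε m * ∑ i, x i ^ 2)) : ℝ) : ℂ) * f x)
      atTop (nhds (∫ x in Set.Icc (0 : Fin n → ℝ) 1, f x)) := by
  have hε : Tendsto ε atTop (𝓝[>] 0) := tendsto_nhdsWithin_iff.mpr ⟨hε0, .of_forall hεpos⟩
  have hcube : IntegrableOn f (Set.univ.pi fun _ => Set.Ico (0 : ℝ) 1) :=
    hf.integrableOn_Icc.mono_set fun x hx =>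
      ⟨fun i => (hx i trivial).1, fun i => (hx i trivial).2.le⟩
  have hIcc : (Set.univ.pi fun _ => Set.Ico (0 : ℝ) 1) =ᵐ[volume] Set.Icc (0 : Fin n → ℝ) 1 := by
    rw [volume_pi]
    exact Measure.univ_pi_Ico_ae_eq_Icc
  rw [← setIntegral_congr_set hIcc]
  refine ((tendsto_setIntegral_prod_jacobiTheta₂_mul hcube).comp hε).congr fun m => ?_
  simpa using
    (rpow_mul_integral_gaussian_mul_eq_setIntegral_prod_jacobiTheta₂ hf hper (hεpos m)).symm
end

section
/- If a : ℝⁿ → ℂ satisfies |∂^α a(ξ)| ≤ C_α ⟨ξ⟩^{m − ρ|α|} for all multi-indices α with |α| ≤ N, where ⟨ξ⟩ = (1+|ξ|²)^{1/2}, 0 ≤ ρ ≤ 1, then its restriction ã = a|_{ℤⁿ} satisfies the discrete symbol estimates |Δ^α ã(ξ)| ≤ C'_α ⟨ξ⟩^{m − ρ|α|} for all |α| ≤ N and ξ ∈ ℤⁿ, where C'_α depends only on C_α, n, α, m, ρ. -/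
/-- Partial derivative in the `j`-th coordinate direction. -/
noncomputable def pd {n : ℕ} (j : Fin n) (f : (Fin n → ℝ) → ℂ) : (Fin n → ℝ) → ℂ :=
  fun x => fderiv ℝ f x (Pi.single j 1)

/-- Iterated multi-index partial derivative `∂^α`. -/
noncomputable def mpd {n : ℕ} (α : Fin n → ℕ) (f : (Fin n → ℝ) → ℂ) : (Fin n → ℝ) → ℂ :=
  ((List.finRange n).map fun j => (pd j)^[α j]).foldr (fun g acc => g ∘ acc) id f

/-- Forward difference in the `j`-th lattice direction. -/
def fdiff {n : ℕ} (j : Fin n) (σ : (Fin n → ℤ) → ℂ) : (Fin n → ℤ) → ℂ :=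
  fun ξ => σ (ξ + Pi.single j 1) - σ ξ

/-- Iterated multi-index forward difference `Δ^α`. -/
def mdiff {n : ℕ} (α : Fin n → ℕ) (σ : (Fin n → ℤ) → ℂ) : (Fin n → ℤ) → ℂ :=
  ((List.finRange n).map fun j => (fdiff j)^[α j]).foldr (fun g acc => g ∘ acc) id σ

/-!
Write `Δ^α` as a composition of `|α|` unit forward differences. Forward differences commute with
each other and with partial derivatives, so applying the mean value theorem one direction at a
time gives `|Δ^α ã(ξ)| ≤ |∂^α a(ξ + v)|` for some shift `v` with `‖v‖_∞ ≤ |α|`. Peetre's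
inequality `⟨ξ + v⟩^s ≤ (2 (1 + n |α|²))^{|s|/2} ⟨ξ⟩^s` then turns the Euclidean estimate at
`ξ + v` into the discrete one at `ξ`.
-/

open fwdDiff

section FwdDiff

variable {M G : Type*} [AddCommMonoid M] [AddCommGroup G]

lemma fwdDiff_comm (h k : M) (f : M → G) : Δ_[h] (Δ_[k] f) = Δ_[k] (Δ_[h] f) := by
  funext x
  simp only [fwdDiff, add_right_comm x h k]
  abel

lemma fwdDiff_foldr_fwdDiff (h : M) (L : List M) (f : M → G) :
    Δ_[h] (L.foldr fwdDiff f) = L.foldr fwdDiff (Δ_[h] f) := by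
  induction L with
  | nil => rfl
  | cons k L ih => rw [List.foldr_cons, List.foldr_cons, fwdDiff_comm, ih]

lemma foldr_fwdDiff_comp {M' : Type*} [AddCommMonoid M'] (φ : M →+ M') (L : List M)
    (f : M' → G) : L.foldr fwdDiff (f ∘ φ) = (L.map φ).foldr fwdDiff f ∘ φ := by
  induction L with
  | nil => rfl
  | cons h L ih =>
    funext x
    simp only [List.foldr_cons, List.map_cons, ih, fwdDiff, Function.comp_apply, map_add]

end FwdDiff

section DirDeriv

variable {E F : Type*} [NormedAddCommGroup E] [NormedSpace ℝ E]
  [NormedAddCommGroup F] [NormedSpace ℝ F]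

noncomputable def dirDeriv (w : E) (f : E → F) : E → F := fun x => fderiv ℝ f x w

lemma contDiff_dirDeriv {k : ℕ} {f : E → F} (hf : ContDiff ℝ (k + 1 : ℕ) f) (w : E) :
    ContDiff ℝ k (dirDeriv w f) :=
  ((hf.fderiv_right (by push_cast; rfl)).clm_apply contDiff_const :)

lemma contDiff_foldr_dirDeriv (L : List E) {k : ℕ} {f : E → F}
    (hf : ContDiff ℝ (k + L.length : ℕ) f) : ContDiff ℝ k (L.foldr dirDeriv f) := by
  induction L generalizing k with
  | nil => simpa using hf
  | cons w L ih =>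
    refine contDiff_dirDeriv (ih ?_) w
    rwa [List.length_cons, ← add_assoc, add_right_comm] at hf

lemma dirDeriv_fwdDiff {f : E → F} (hf : Differentiable ℝ f) (w h : E) :
    dirDeriv w (Δ_[h] f) = Δ_[h] (dirDeriv w f) := by
  funext x
  have hshift : DifferentiableAt ℝ (fun y => f (y + h)) x :=
    (differentiableAt_comp_add_right h).2 (hf _)
  change fderiv ℝ ((fun y => f (y + h)) - f) x w = fderiv ℝ f (x + h) w - fderiv ℝ f x w
  rw [fderiv_sub hshift (hf x), fderiv_comp_add_right]
  rfl

lemma foldr_dirDeriv_fwdDiff (L : List E) {f : E → F} (hf : ContDiff ℝ L.length f) (h : E) :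
    L.foldr dirDeriv (Δ_[h] f) = Δ_[h] (L.foldr dirDeriv f) := by
  induction L with
  | nil => rfl
  | cons w L ih =>
    have hdiff : Differentiable ℝ (L.foldr dirDeriv f) :=
      (contDiff_foldr_dirDeriv L (k := 1) (by rwa [add_comm])).differentiable one_ne_zero
    rw [List.foldr_cons, List.foldr_cons, ih (hf.of_le (by simp)), dirDeriv_fwdDiff hdiff]

lemma contDiff_fwdDiff {k : WithTop ℕ∞} {f : E → F} (hf : ContDiff ℝ k f) (h : E) :
    ContDiff ℝ k (Δ_[h] f) :=
  (hf.comp (contDiff_id.add contDiff_const)).sub hf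

lemma exists_norm_fwdDiff_le_norm_dirDeriv {f : E → F} (hf : ContDiff ℝ 1 f) (h x : E) :
    ∃ t ∈ Set.Icc (0 : ℝ) 1, ‖Δ_[h] f x‖ ≤ ‖dirDeriv h f (x + t • h)‖ := by
  set g : ℝ → F := fun t => f (x + t • h)
  have hg : ∀ t : ℝ, HasDerivAt g (dirDeriv h f (x + t • h)) t := fun t =>
    (hf.differentiable one_ne_zero _).hasFDerivAt.comp_hasDerivAt t
      (by simpa using ((hasDerivAt_id t).smul_const h).const_add x)
  have hcont : Continuous fun t : ℝ => dirDeriv h f (x + t • h) :=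
    ((hf.continuous_fderiv one_ne_zero).comp (by fun_prop)).clm_apply continuous_const
  obtain ⟨t₀, ht₀, hmax⟩ := isCompact_Icc.exists_isMaxOn (Set.nonempty_Icc.2 zero_le_one)
    hcont.norm.continuousOn
  refine ⟨t₀, ht₀, ?_⟩
  have := norm_image_sub_le_of_norm_deriv_le_segment' (fun t _ => (hg t).hasDerivWithinAt)
    (fun t ht => hmax (Set.Ico_subset_Icc_self ht)) 1 (Set.right_mem_Icc.2 zero_le_one)
  simpa [g, fwdDiff] using this

lemma exists_norm_foldr_fwdDiff_le (L : List E) {f : E → F} (hf : ContDiff ℝ L.length f)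
    (x : E) : ∃ v : E, ‖v‖ ≤ (L.map norm).sum ∧
      ‖L.foldr fwdDiff f x‖ ≤ ‖L.foldr dirDeriv f (x + v)‖ := by
  induction L generalizing f with
  | nil => exact ⟨0, by simp, by simp⟩
  | cons h L ih =>
    have hf' : ContDiff ℝ L.length f := hf.of_le (by simp)
    obtain ⟨v, hv, hle⟩ := ih (contDiff_fwdDiff hf' h)
    have hC1 : ContDiff ℝ 1 (L.foldr dirDeriv f) :=
      contDiff_foldr_dirDeriv L (k := 1) (by rwa [add_comm])
    obtain ⟨t, ⟨ht0, ht1⟩, hmvt⟩ := exists_norm_fwdDiff_le_norm_dirDeriv hC1 h (x + v)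
    refine ⟨v + t • h, ?_, ?_⟩
    · calc ‖v + t • h‖ ≤ ‖v‖ + t * ‖h‖ := by
            simpa [norm_smul, abs_of_nonneg ht0] using norm_add_le v (t • h)
        _ ≤ (L.map norm).sum + ‖h‖ := by gcongr; exact mul_le_of_le_one_left (norm_nonneg h) ht1
        _ = ((h :: L).map norm).sum := by simp [add_comm]
    · calc ‖(h :: L).foldr fwdDiff f x‖ = ‖L.foldr fwdDiff (Δ_[h] f) x‖ := by
            rw [List.foldr_cons, fwdDiff_foldr_fwdDiff]
        _ ≤ ‖Δ_[h] (L.foldr dirDeriv f) (x + v)‖ := by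
            rwa [← foldr_dirDeriv_fwdDiff L hf']
        _ ≤ ‖(h :: L).foldr dirDeriv f (x + (v + t • h))‖ := by
            rwa [List.foldr_cons, ← add_assoc]

end DirDeriv

section MultiIndex

variable {n : ℕ}

def multiIndexList (α : Fin n → ℕ) : List (Fin n) :=
  (List.finRange n).flatMap fun j => List.replicate (α j) j

lemma length_multiIndexList (α : Fin n → ℕ) : (multiIndexList α).length = ∑ i, α i := by
  simp only [multiIndexList, List.length_flatMap, List.length_replicate]
  rw [← List.sum_toFinset _ (List.nodup_finRange n), List.toFinset_finRange]

lemma iterate_eq_foldr_replicate {ι X : Type*} (op : ι → X → X) (j : ι) (k : ℕ) (x : X) :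
    (op j)^[k] x = (List.replicate k j).foldr op x := by
  induction k with
  | zero => rfl
  | succ k ih => rw [Function.iterate_succ_apply', List.replicate_succ, List.foldr_cons, ih]

lemma foldr_map_iterate {ι X : Type*} (op : ι → X → X) (α : ι → ℕ) (L : List ι) (x : X) :
    (L.map fun j => (op j)^[α j]).foldr (fun g acc => g ∘ acc) id x
      = (L.flatMap fun j => List.replicate (α j) j).foldr op x := by
  induction L with
  | nil => rfl
  | cons j L ih =>
    simp only [List.map_cons, List.foldr_cons, Function.comp_apply, List.flatMap_cons,
      List.foldr_append, ih, iterate_eq_foldr_replicate]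

lemma mpd_eq_foldr_dirDeriv (α : Fin n → ℕ) (f : (Fin n → ℝ) → ℂ) :
    mpd α f = ((multiIndexList α).map fun j => Pi.single j 1).foldr dirDeriv f := by
  rw [List.foldr_map]
  exact foldr_map_iterate pd α _ f

lemma mdiff_eq_foldr_fwdDiff (α : Fin n → ℕ) (σ : (Fin n → ℤ) → ℂ) :
    mdiff α σ = ((multiIndexList α).map fun j => Pi.single j 1).foldr fwdDiff σ := by
  rw [List.foldr_map]
  exact foldr_map_iterate fdiff α _ σ

lemma mdiff_restrict_eq_foldr_fwdDiff (α : Fin n → ℕ) (f : (Fin n → ℝ) → ℂ) (ξ : Fin n → ℤ) :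
    mdiff α (fun η => f fun i => (η i : ℝ)) ξ
      = ((multiIndexList α).map fun j => Pi.single j 1).foldr fwdDiff f fun i => (ξ i : ℝ) := by
  set φ := (Int.castAddHom ℝ).compLeft (Fin n)
  have hφ : ∀ j : Fin n, φ (Pi.single j 1) = Pi.single j 1 := fun j => by
    ext i
    simp [φ, Pi.single_apply]
  rw [mdiff_eq_foldr_fwdDiff]
  refine (congrFun (foldr_fwdDiff_comp φ _ f) ξ).trans ?_
  simp only [List.map_map, Function.comp_def, hφ]
  rfl

end MultiIndex

section Peetre

lemma rpow_le_rpow_abs_mul_rpow {a b K : ℝ} (ha : 0 < a) (hb : 0 < b) (hab : a ≤ K * b)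
    (hba : b ≤ K * a) (s : ℝ) : a ^ s ≤ K ^ |s| * b ^ s := by
  have hK : 0 < K := pos_of_mul_pos_left (ha.trans_le hab) hb.le
  rcases le_or_gt 0 s with hs | hs
  · rw [abs_of_nonneg hs, ← Real.mul_rpow hK.le hb.le]
    exact Real.rpow_le_rpow ha.le hab hs
  · have hdiv : b / K ≤ a := by rwa [div_le_iff₀ hK, mul_comm]
    calc a ^ s ≤ (b / K) ^ s := Real.rpow_le_rpow_of_nonpos (div_pos hb hK) hdiv hs.le
      _ = K ^ |s| * b ^ s := by
        rw [abs_of_neg hs, Real.div_rpow hb.le hK.le, Real.rpow_neg hK.le, div_eq_mul_inv,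
          mul_comm]

variable {n : ℕ}

lemma sqrt_one_add_sum_sq_add_le (x v : Fin n → ℝ) {R : ℝ} (hv : ‖v‖ ≤ R) :
    √(1 + ∑ i, (x i + v i) ^ 2) ≤ √(2 * (1 + n * R ^ 2)) * √(1 + ∑ i, x i ^ 2) := by
  rw [← Real.sqrt_mul (by positivity)]
  refine Real.sqrt_le_sqrt ?_
  have hvi : ∀ i, v i ^ 2 ≤ R ^ 2 := fun i => by
    have hi := abs_le.1 ((norm_le_pi_norm v i).trans hv)
    exact sq_le_sq' hi.1 hi.2
  have hsum : ∑ i, (x i + v i) ^ 2 ≤ 2 * ∑ i, x i ^ 2 + n * (2 * R ^ 2) := by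
    calc ∑ i, (x i + v i) ^ 2 ≤ ∑ i, (2 * x i ^ 2 + 2 * R ^ 2) :=
          Finset.sum_le_sum fun i _ => by nlinarith [sq_nonneg (x i - v i), hvi i]
      _ = 2 * ∑ i, x i ^ 2 + n * (2 * R ^ 2) := by
          simp [Finset.sum_add_distrib, Finset.mul_sum]
  have : 0 ≤ (n * R ^ 2) * ∑ i, x i ^ 2 := by positivity
  nlinarith

lemma rpow_sqrt_one_add_sum_sq_add_le (x v : Fin n → ℝ) {R : ℝ} (hv : ‖v‖ ≤ R) (s : ℝ) :
    √(1 + ∑ i, (x i + v i) ^ 2) ^ s ≤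
      √(2 * (1 + n * R ^ 2)) ^ |s| * √(1 + ∑ i, x i ^ 2) ^ s := by
  refine rpow_le_rpow_abs_mul_rpow (by positivity) (by positivity)
    (sqrt_one_add_sum_sq_add_le x v hv) ?_ s
  simpa using sqrt_one_add_sum_sq_add_le (x + v) (-v) (R := R) (by rwa [norm_neg])

end Peetre

theorem stmt5_general {n N : ℕ} (a : (Fin n → ℝ) → ℂ) (m ρ : ℝ)
    (ha : ContDiff ℝ N a)
    (C : (Fin n → ℕ) → ℝ)
    (hC : ∀ α : Fin n → ℕ, ∑ i, α i ≤ N → ∀ ξ : Fin n → ℝ,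
      ‖mpd α a ξ‖ ≤ C α * Real.sqrt (1 + ∑ i, ξ i ^ 2) ^ (m - ρ * ∑ i, (α i : ℝ))) :
    ∃ C' : (Fin n → ℕ) → ℝ, ∀ α : Fin n → ℕ, ∑ i, α i ≤ N → ∀ ξ : Fin n → ℤ,
      ‖mdiff α (fun η => a fun i => (η i : ℝ)) ξ‖ ≤
        C' α * Real.sqrt (1 + ∑ i, (ξ i : ℝ) ^ 2) ^ (m - ρ * ∑ i, (α i : ℝ)) := by
  refine ⟨fun α => C α * √(2 * (1 + n * ((∑ i, α i : ℕ) : ℝ) ^ 2)) ^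
    |m - ρ * ∑ i, (α i : ℝ)|, fun α hα ξ => ?_⟩
  set s := m - ρ * ∑ i, (α i : ℝ)
  set L := (multiIndexList α).map fun j => (Pi.single j 1 : Fin n → ℝ)
  have hL : L.length = ∑ i, α i := by simp [L, length_multiIndexList]
  have hLnorm : (L.map norm).sum = ((∑ i, α i : ℕ) : ℝ) := by
    simp [L, Function.comp_def, Pi.norm_single, ← hL]
  obtain ⟨v, hv, hle⟩ := exists_norm_foldr_fwdDiff_le L
    (ha.of_le (by exact_mod_cast hL ▸ hα)) fun i => (ξ i : ℝ)
  have hCα : 0 ≤ C α := by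
    have h0 := (norm_nonneg _).trans (hC α hα 0)
    exact nonneg_of_mul_nonneg_left h0 (by positivity)
  calc ‖mdiff α (fun η => a fun i => (η i : ℝ)) ξ‖
      ≤ ‖mpd α a ((fun i => (ξ i : ℝ)) + v)‖ := by
        rwa [mdiff_restrict_eq_foldr_fwdDiff, mpd_eq_foldr_dirDeriv]
    _ ≤ C α * √(1 + ∑ i, ((ξ i : ℝ) + v i) ^ 2) ^ s := hC α hα _
    _ ≤ C α * (√(2 * (1 + n * ((∑ i, α i : ℕ) : ℝ) ^ 2)) ^ |s| *
          √(1 + ∑ i, (ξ i : ℝ) ^ 2) ^ s) := by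
        gcongr
        exact rpow_sqrt_one_add_sum_sq_add_le _ v (hv.trans hLnorm.le) s
    _ = _ := by ring

/-- Euclidean symbol estimates up to order `N` imply the discrete (difference) symbol
estimates for the restriction to the lattice `ℤⁿ`, with constants depending only on the
original ones and on `n, α, m, ρ`. -/
theorem stmt5 {n N : ℕ} (a : (Fin n → ℝ) → ℂ) (m ρ : ℝ) (hρ0 : 0 ≤ ρ) (hρ1 : ρ ≤ 1)
    (ha : ContDiff ℝ N a)
    (C : (Fin n → ℕ) → ℝ)
    (hC : ∀ α : Fin n → ℕ, ∑ i, α i ≤ N → ∀ ξ : Fin n → ℝ,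
      ‖mpd α a ξ‖ ≤ C α * Real.sqrt (1 + ∑ i, ξ i ^ 2) ^ (m - ρ * ∑ i, (α i : ℝ))) :
    ∃ C' : (Fin n → ℕ) → ℝ, ∀ α : Fin n → ℕ, ∑ i, α i ≤ N → ∀ ξ : Fin n → ℤ,
      ‖mdiff α (fun η => a fun i => (η i : ℝ)) ξ‖ ≤
        C' α * Real.sqrt (1 + ∑ i, (ξ i : ℝ) ^ 2) ^ (m - ρ * ∑ i, (α i : ℝ)) :=
  stmt5_general a m ρ ha C hC
end

section
/- Limiting norm identity for periodic functions: if P is a continuous 1-periodic function on ℝⁿ and 1 ≤ p < ∞, then lim_{ε → 0⁺} ε^{n/2} ∫_{ℝⁿ} |P(x)|^p e^{-π ε |x|²} dx = ∫_{[0,1]ⁿ} |P(x)|^p dx. -/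
/-!
For a character `e_m(x) = exp (2πi ⟨m, x⟩)`, `m ∈ ℤⁿ`, the Gaussian average is computed exactly:
`ε^{n/2} ∫ e_m(x) e^{-πε|x|²} dx = e^{-π|m|²/ε}`, which tends to `1` if `m = 0` and to `0`
otherwise, i.e. to the mean of `e_m` over the unit cube. A continuous `ℤⁿ`-periodic function is a
continuous function on the torus `ℝⁿ/ℤⁿ`, on which both the Gaussian averages (`ε > 0`, against a
probability density) and the cube average are `1`-Lipschitz linear functionals. So the functions
for which the limit holds form a closed subspace; it contains the characters, hence, by
Stone–Weierstrass, everything.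
-/

open MeasureTheory Real Filter Set Complex Topology

noncomputable section

section

variable {α R M N : Type*} [Semiring R] [AddCommMonoid M] [Module R M] [AddCommMonoid N]
  [Module R N] [TopologicalSpace N] [ContinuousAdd N] [ContinuousConstSMul R N]

def tendstoSubmodule (l : Filter α) (F : α → M → N) (f : M → N)
    (hF : ∀ᶠ a in l, IsLinearMap R (F a)) (hf : IsLinearMap R f) : Submodule R M where
  carrier := {x | Tendsto (F · x) l (𝓝 (f x))}
  add_mem' {x y} hx hy := by
    rw [mem_ofPred_eq, hf.map_add]
    exact (hx.add hy).congr' (hF.mono fun a ha => (ha.map_add x y).symm)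
  zero_mem' := by
    rw [mem_ofPred_eq, hf.map_zero]
    exact tendsto_const_nhds.congr' (hF.mono fun a ha => ha.map_zero.symm)
  smul_mem' c x hx := by
    rw [mem_ofPred_eq, hf.map_smul]
    exact (hx.const_smul c).congr' (hF.mono fun a ha => (ha.map_smul c x).symm)

end

theorem isClosed_setOf_tendsto_of_eventually_lipschitzWith {α X Y : Type*} [PseudoMetricSpace X]
    [PseudoMetricSpace Y] {l : Filter α} {F : α → X → Y} {f : X → Y} {K : NNReal}
    (hF : ∀ᶠ a in l, LipschitzWith K (F a)) (hf : Continuous f) :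
    IsClosed {x | Tendsto (F · x) l (𝓝 (f x))} := by
  -- Along `comap (↑) l` only the indices in `s ∈ l` are seen, and there the family is equicontinuous.
  obtain ⟨s, hs, hsF⟩ := hF.exists_mem
  have hequi : Equicontinuous fun a : s => F a :=
    (LipschitzWith.uniformEquicontinuous (fun a : s => F a) K fun a => hsF a a.2).equicontinuous
  convert hequi.isClosed_setOfPred_tendsto (l := comap (↑) l) hf using 3
  exact (tendsto_comap'_iff (by rwa [Subtype.range_coe])).symm

variable {ι : Type*}

def toTorus (x : ι → ℝ) : UnitAddTorus ι := fun i => x i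

theorem isOpenQuotientMap_toTorus : IsOpenQuotientMap (toTorus (ι := ι)) :=
  .piMap fun _ => QuotientAddGroup.isOpenQuotientMap_mk

theorem continuous_toTorus : Continuous (toTorus (ι := ι)) :=
  isOpenQuotientMap_toTorus.continuous

theorem exists_add_intCast_of_toTorus_eq {x y : ι → ℝ} (h : toTorus x = toTorus y) :
    ∃ k : ι → ℤ, y = x + fun i => (k i : ℝ) := by
  have (i : ι) : ∃ k : ℤ, y i = x i + k := by
    obtain ⟨k, hk⟩ := AddSubgroup.mem_zmultiples_iff.1 (QuotientAddGroup.eq.1 (congrFun h i))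
    exact ⟨k, by rw [zsmul_one] at hk; linarith⟩
  choose k hk using this
  exact ⟨k, funext hk⟩

theorem exists_continuousMap_comp_toTorus {X : Type*} [TopologicalSpace X] {f : (ι → ℝ) → X}
    (hf : Continuous f) (hper : ∀ (x : ι → ℝ) (k : ι → ℤ), f (x + fun i => (k i : ℝ)) = f x) :
    ∃ g : C(UnitAddTorus ι, X), ∀ x, g (toTorus x) = f x := by
  let π' : C(ι → ℝ, UnitAddTorus ι) := ⟨toTorus, continuous_toTorus⟩
  have hfactor : Function.FactorsThrough f π' := fun x y hxy => by
    obtain ⟨k, rfl⟩ := exists_add_intCast_of_toTorus_eq hxy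
    exact (hper x k).symm
  have hq : Topology.IsQuotientMap π' := isOpenQuotientMap_toTorus.isQuotientMap
  exact ⟨hq.lift ⟨f, hf⟩ hfactor, fun x => DFunLike.congr_fun (hq.lift_comp ⟨f, hf⟩ hfactor) x⟩

theorem setIntegral_Icc_fourier (k : ℤ) :
    ∫ t in Icc (0 : ℝ) 1, fourier k (t : UnitAddCircle) = if k = 0 then 1 else 0 := by
  have h := fourierCoeff_eq_intervalIntegral (T := 1) (fourier k) 0 0
  rw [fourierCoeff_fourier, zero_add, intervalIntegral.integral_of_le zero_le_one] at h
  simpa [fourier_zero, eq_comm, Pi.single_apply, integral_Icc_eq_integral_Ioc] using h.symm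

variable [Fintype ι]

theorem mFourier_toTorus (m : ι → ℤ) (x : ι → ℝ) :
    UnitAddTorus.mFourier m (toTorus x) = cexp (2 * π * I * ∑ i, (m i : ℝ) * x i) := by
  simp only [UnitAddTorus.mFourier, toTorus, ContinuousMap.coe_mk, fourier_coe_apply,
    ← Complex.exp_sum]
  push_cast
  simp only [div_one, Finset.mul_sum, mul_assoc]

theorem setIntegral_Icc_mFourier_toTorus (m : ι → ℤ) :
    ∫ x in Icc (0 : ι → ℝ) 1, UnitAddTorus.mFourier m (toTorus x) = if m = 0 then 1 else 0 := by
  rw [← pi_univ_Icc, volume_pi, Measure.restrict_pi_pi]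
  simp only [UnitAddTorus.mFourier, toTorus, ContinuousMap.coe_mk, Pi.zero_apply, Pi.one_apply]
  rw [integral_fintype_prod_eq_prod (fun i (t : ℝ) => fourier (m i) (t : UnitAddCircle))]
  simp_rw [setIntegral_Icc_fourier]
  split_ifs with hm
  · simp [hm]
  · obtain ⟨i, hi⟩ := Function.ne_iff.1 hm
    exact Finset.prod_eq_zero (Finset.mem_univ i) (if_neg hi)

def gaussianDensity (ε : ℝ) (x : ι → ℝ) : ℝ :=
  ε ^ ((Fintype.card ι : ℝ) / 2) * rexp (-(π * ε * ∑ i, x i ^ 2))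

theorem integral_gaussianDensity_smul_cexp {ε : ℝ} (hε : 0 < ε) (ξ : ι → ℝ) :
    ∫ x, gaussianDensity ε x • cexp (2 * π * I * ∑ i, ξ i * x i) =
      rexp (-(π * ∑ i, ξ i ^ 2) / ε) := by
  have hπε : 0 < ((π * ε : ℝ) : ℂ).re := by simpa using mul_pos pi_pos hε
  have hscale : ((ε ^ ((Fintype.card ι : ℝ) / 2) : ℝ) : ℂ) *
      (π / ((π * ε : ℝ) : ℂ)) ^ (Fintype.card ι / 2 : ℂ) = 1 := by
    rw [show (π / ((π * ε : ℝ) : ℂ)) = ((ε ^ (-1 : ℝ) : ℝ) : ℂ) by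
      rw [rpow_neg_one]; push_cast; field_simp [pi_ne_zero]]
    rw [← ofReal_natCast, ← ofReal_ofNat, ← ofReal_div, ← ofReal_cpow (by positivity),
      ← ofReal_mul, ← rpow_mul hε.le, ← rpow_add hε]
    norm_num
  have hexponent : (∑ i, (2 * π * I * ξ i) ^ 2) / (4 * ((π * ε : ℝ) : ℂ)) =
      ((-(π * ∑ i, ξ i ^ 2) / ε : ℝ) : ℂ) := by
    have : (π : ℂ) ≠ 0 := ofReal_ne_zero.2 pi_ne_zero
    have : (ε : ℂ) ≠ 0 := ofReal_ne_zero.2 hε.ne'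
    push_cast
    rw [Finset.sum_div, Finset.mul_sum, ← Finset.sum_neg_distrib, Finset.sum_div]
    refine Finset.sum_congr rfl fun i _ => ?_
    field_simp
    ring_nf
    rw [I_sq]
    ring
  calc ∫ x, gaussianDensity ε x • cexp (2 * π * I * ∑ i, ξ i * x i)
      = ∫ x : ι → ℝ, ((ε ^ ((Fintype.card ι : ℝ) / 2) : ℝ) : ℂ) *
          cexp (-((π * ε : ℝ) : ℂ) * ∑ i, (x i : ℂ) ^ 2 + ∑ i, (2 * π * I * ξ i) * x i) := by
        congr 1 with x
        rw [gaussianDensity, real_smul, ofReal_mul, mul_assoc, ofReal_exp, ← Complex.exp_add]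
        push_cast
        congr 2
        simp only [Finset.mul_sum, neg_mul, Finset.sum_neg_distrib, mul_assoc]
    _ = rexp (-(π * ∑ i, ξ i ^ 2) / ε) := by
        rw [integral_const_mul, GaussianFourier.integral_cexp_neg_mul_sum_add hπε, ← mul_assoc,
          hscale, one_mul, hexponent, ofReal_exp]

theorem integral_gaussianDensity {ε : ℝ} (hε : 0 < ε) : ∫ x : ι → ℝ, gaussianDensity ε x = 1 := by
  have h := integral_gaussianDensity_smul_cexp hε (0 : ι → ℝ)
  simp only [Pi.zero_apply, zero_mul, Finset.sum_const_zero, mul_zero, ofReal_zero,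
    Complex.exp_zero, real_smul, mul_one, zero_pow two_ne_zero, neg_zero, zero_div,
    Real.exp_zero, ofReal_one] at h
  exact ofReal_eq_one.1 (integral_complex_ofReal.symm.trans h)

-- A non-integrable function would have integral `0`, not `1`.
theorem integrable_gaussianDensity {ε : ℝ} (hε : 0 < ε) : Integrable (gaussianDensity (ι := ι) ε) :=
  Integrable.of_integral_ne_zero (by rw [integral_gaussianDensity hε]; exact one_ne_zero)

theorem gaussianDensity_nonneg {ε : ℝ} (hε : 0 ≤ ε) (x : ι → ℝ) : 0 ≤ gaussianDensity ε x := by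
  unfold gaussianDensity; positivity

section

variable {E : Type*} [NormedAddCommGroup E] [NormedSpace ℝ E]

theorem integrable_gaussianDensity_smul {ε : ℝ} (hε : 0 < ε) {f : (ι → ℝ) → E}
    (hf : AEStronglyMeasurable f) {C : ℝ} (hC : ∀ x, ‖f x‖ ≤ C) :
    Integrable (fun x => gaussianDensity ε x • f x) :=
  (integrable_gaussianDensity hε).smul_bdd C hf (ae_of_all _ hC)

theorem norm_integral_gaussianDensity_smul_le {ε : ℝ} (hε : 0 < ε) {f : (ι → ℝ) → E} {C : ℝ}
    (hC : ∀ x, ‖f x‖ ≤ C) : ‖∫ x, gaussianDensity ε x • f x‖ ≤ C := by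
  calc ‖∫ x, gaussianDensity ε x • f x‖ ≤ ∫ x, gaussianDensity ε x * C :=
        norm_integral_le_of_norm_le ((integrable_gaussianDensity hε).mul_const C)
          (ae_of_all _ fun x => by
            rw [norm_smul, Real.norm_of_nonneg (gaussianDensity_nonneg hε.le x)]
            exact mul_le_mul_of_nonneg_left (hC x) (gaussianDensity_nonneg hε.le x))
    _ = C := by rw [integral_mul_const, integral_gaussianDensity hε, one_mul]

end

def torusGaussianAverage (ε : ℝ) (g : C(UnitAddTorus ι, ℂ)) : ℂ :=
  ∫ x, gaussianDensity ε x • g (toTorus x)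

def cubeAverage (g : C(UnitAddTorus ι, ℂ)) : ℂ :=
  ∫ x in Icc (0 : ι → ℝ) 1, g (toTorus x)

theorem integrable_gaussianDensity_smul_comp_toTorus {ε : ℝ} (hε : 0 < ε)
    (g : C(UnitAddTorus ι, ℂ)) : Integrable fun x => gaussianDensity ε x • g (toTorus x) :=
  integrable_gaussianDensity_smul hε (g.continuous.comp continuous_toTorus).aestronglyMeasurable
    fun _ => g.norm_coe_le_norm _

theorem integrableOn_Icc_comp_toTorus (g : C(UnitAddTorus ι, ℂ)) :
    IntegrableOn (fun x => g (toTorus x)) (Icc 0 1) :=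
  (g.continuous.comp continuous_toTorus).continuousOn.integrableOn_compact isCompact_Icc

theorem isLinearMap_torusGaussianAverage {ε : ℝ} (hε : 0 < ε) :
    IsLinearMap ℂ (torusGaussianAverage (ι := ι) ε) where
  map_add g h := by
    simp only [torusGaussianAverage, ContinuousMap.add_apply, smul_add]
    exact integral_add (integrable_gaussianDensity_smul_comp_toTorus hε g)
      (integrable_gaussianDensity_smul_comp_toTorus hε h)
  map_smul c g := by
    simp only [torusGaussianAverage, ContinuousMap.smul_apply, smul_comm _ c]
    exact integral_smul c _

theorem isLinearMap_cubeAverage : IsLinearMap ℂ (cubeAverage (ι := ι)) where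
  map_add g h := integral_add (integrableOn_Icc_comp_toTorus g) (integrableOn_Icc_comp_toTorus h)
  map_smul c _ := integral_smul c _

theorem lipschitzWith_torusGaussianAverage {ε : ℝ} (hε : 0 < ε) :
    LipschitzWith 1 (torusGaussianAverage (ι := ι) ε) :=
  LipschitzWith.of_dist_le_mul fun g h => by
    rw [NNReal.coe_one, one_mul, dist_eq_norm, dist_eq_norm,
      ← (isLinearMap_torusGaussianAverage hε).map_sub]
    exact norm_integral_gaussianDensity_smul_le hε fun _ => (g - h).norm_coe_le_norm _

theorem lipschitzWith_cubeAverage : LipschitzWith 1 (cubeAverage (ι := ι)) :=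
  LipschitzWith.of_dist_le_mul fun g h => by
    rw [NNReal.coe_one, one_mul, dist_eq_norm, dist_eq_norm, ← isLinearMap_cubeAverage.map_sub]
    simpa [cubeAverage, measureReal_def, Real.volume_Icc_pi] using
      norm_setIntegral_le_of_norm_le_const (measure_Icc_lt_top (μ := volume) (a := 0) (b := 1))
        fun x _ => (g - h).norm_coe_le_norm (toTorus x)

theorem tendsto_torusGaussianAverage_mFourier (m : ι → ℤ) :
    Tendsto (torusGaussianAverage · (UnitAddTorus.mFourier m)) (𝓝[>] 0)
      (𝓝 (cubeAverage (UnitAddTorus.mFourier m))) := by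
  have hchar : ∀ ε > 0, torusGaussianAverage ε (UnitAddTorus.mFourier m) =
      rexp (-(π * ∑ i, (m i : ℝ) ^ 2) / ε) := fun ε hε => by
    simp only [torusGaussianAverage, mFourier_toTorus]
    exact integral_gaussianDensity_smul_cexp hε _
  rw [cubeAverage, setIntegral_Icc_mFourier_toTorus]
  refine Tendsto.congr' (eventually_nhdsWithin_of_forall fun ε hε => (hchar ε hε).symm) ?_
  split_ifs with hm
  · simp [hm]
  · have hpos : 0 < π * ∑ i, (m i : ℝ) ^ 2 := by
      obtain ⟨i, hi⟩ := Function.ne_iff.1 hm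
      have hi' : (m i : ℝ) ≠ 0 := Int.cast_ne_zero.2 hi
      exact mul_pos pi_pos
        (Finset.sum_pos' (fun j _ => sq_nonneg _) ⟨i, Finset.mem_univ i, by positivity⟩)
    have hexponent : Tendsto (fun ε => -(π * ∑ i, (m i : ℝ) ^ 2) / ε) (𝓝[>] 0) atBot := by
      simpa only [div_eq_mul_inv] using
        tendsto_inv_nhdsGT_zero.const_mul_atTop_of_neg (neg_neg_of_pos hpos)
    rw [← ofReal_zero, tendsto_ofReal_iff]
    exact Real.tendsto_exp_atBot.comp hexponent

theorem tendsto_torusGaussianAverage (g : C(UnitAddTorus ι, ℂ)) :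
    Tendsto (torusGaussianAverage · g) (𝓝[>] 0) (𝓝 (cubeAverage g)) := by
  let S := tendstoSubmodule (𝓝[>] 0) (torusGaussianAverage (ι := ι)) cubeAverage
    (eventually_nhdsWithin_of_forall fun _ => isLinearMap_torusGaussianAverage)
    isLinearMap_cubeAverage
  have hclosed : IsClosed (S : Set C(UnitAddTorus ι, ℂ)) :=
    isClosed_setOf_tendsto_of_eventually_lipschitzWith
      (eventually_nhdsWithin_of_forall fun _ => lipschitzWith_torusGaussianAverage)
      lipschitzWith_cubeAverage.continuous
  have hspan : Submodule.span ℂ (range UnitAddTorus.mFourier) ≤ S :=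
    Submodule.span_le.2 (range_subset_iff.2 tendsto_torusGaussianAverage_mFourier)
  have hS := Submodule.topologicalClosure_minimal _ hspan hclosed
  rw [UnitAddTorus.span_mFourier_closure_eq_top] at hS
  exact hS Submodule.mem_top

theorem tendsto_integral_gaussianDensity_smul_of_periodic {f : (ι → ℝ) → ℂ} (hf : Continuous f)
    (hper : ∀ (x : ι → ℝ) (k : ι → ℤ), f (x + fun i => (k i : ℝ)) = f x) :
    Tendsto (fun ε => ∫ x, gaussianDensity ε x • f x) (𝓝[>] 0)
      (𝓝 (∫ x in Icc (0 : ι → ℝ) 1, f x)) := by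
  obtain ⟨g, hg⟩ := exists_continuousMap_comp_toTorus hf hper
  simpa only [torusGaussianAverage, cubeAverage, hg] using tendsto_torusGaussianAverage g

theorem tendsto_rpow_mul_integral_mul_exp_of_periodic {f : (ι → ℝ) → ℝ} (hf : Continuous f)
    (hper : ∀ (x : ι → ℝ) (k : ι → ℤ), f (x + fun i => (k i : ℝ)) = f x) :
    Tendsto (fun ε => ε ^ ((Fintype.card ι : ℝ) / 2) *
        ∫ x, f x * rexp (-(π * ε * ∑ i, x i ^ 2))) (𝓝[>] 0)
      (𝓝 (∫ x in Icc (0 : ι → ℝ) 1, f x)) := by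
  have h := tendsto_integral_gaussianDensity_smul_of_periodic (continuous_ofReal.comp hf)
    fun x k => congrArg ofReal (hper x k)
  simp only [Function.comp_apply, real_smul, ← ofReal_mul, integral_complex_ofReal,
    tendsto_ofReal_iff] at h
  refine h.congr fun ε => ?_
  rw [← integral_const_mul]
  congr 1 with x
  rw [gaussianDensity]
  ring

/-- Limiting norm identity: for continuous 1-periodic `P` and `1 ≤ p < ∞`,
`ε^{n/2} ∫_{ℝⁿ} |P(x)|^p e^{-π ε |x|²} dx → ∫_{[0,1]ⁿ} |P(x)|^p dx` as `ε → 0⁺`. -/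
theorem stmt15 {n : ℕ} (P : (Fin n → ℝ) → ℂ) (hP : Continuous P)
    (hper : ∀ (x : Fin n → ℝ) (k : Fin n → ℤ), P (x + fun i => (k i : ℝ)) = P x)
    (p : ℝ) (hp : 1 ≤ p) :
    Tendsto (fun ε : ℝ =>
        ε ^ ((n : ℝ) / 2) *
          ∫ x : Fin n → ℝ, ‖P x‖ ^ p * Real.exp (-(π * ε * ∑ i, x i ^ 2)))
      (nhdsWithin 0 (Set.Ioi 0)) (nhds (∫ x in Set.Icc (0 : Fin n → ℝ) 1, ‖P x‖ ^ p)) := by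
  simpa only [Fintype.card_fin] using tendsto_rpow_mul_integral_mul_exp_of_periodic
    (hP.norm.rpow_const fun _ => Or.inr (zero_le_one.trans hp)) fun x k => by rw [hper]
end
end
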